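/- Let r be even with 2 ≤ r ≤ n, let x₁,…,x_r ∈ F₂ⁿ be linearly independent, and let A ∈ SGL_n(F₂) with xᵢᵀ A⁻¹ xⱼ = 1 for all i, j ≤ r. Then there exists x_{r+1} ∈ F₂ⁿ and an index s ∈ {1,…,r} such that x_sᵀ A⁻¹ x_{r+1} = 1 while x_tᵀ A⁻¹ x_{r+1} = 0 for all t ∈ {1,…,r+1} \ {s}. -/

import Mathlib

/-!
Over `F₂` the quadratic form `q v = vᵀ B v` of a symmetric matrix `B` is additive (the cross
terms `2 uᵀ B v` vanish), hence linear, so for invertible `B` it is represented by a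
characteristic vector: `q v = cᵀ B v`. A vector `w` with `x_iᵀ B w = δ_{is}` exists for every `s`
since the `x_i` are independent; the extra condition `q w = 0` is one more linear condition
`cᵀ B w = 0`. If `c` lies outside the span of the `x_i` it can simply be added to the system.
Otherwise `c = ∑ aᵢ xᵢ`, and pairing with `x_j` gives `∑ aᵢ = q x_j = 1`; as `r` is even, some
`a_s` vanishes, and for that `s` the condition `cᵀ B w = a_s = 0` holds automatically.
-/

open Matrix

namespace Matrix

variable {K m n : Type*} [Field K] [Fintype m] [Fintype n]

theorem exists_dotProduct_eq_of_linearIndependent {y : m → n → K}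
    (hy : LinearIndependent K y) (t : m → K) : ∃ w, ∀ i, y i ⬝ᵥ w = t i := by
  have hrank : (of y).rank = Fintype.card m := LinearIndependent.rank_matrix hy
  have hrange : LinearMap.range (of y).mulVecLin = ⊤ := by
    apply Submodule.eq_top_of_finrank_eq
    rw [← rank, hrank, Module.finrank_fintype_fun_eq_card]
  obtain ⟨w, hw⟩ : t ∈ LinearMap.range (of y).mulVecLin := hrange ▸ Submodule.mem_top
  exact ⟨w, fun i => congrFun hw i⟩

theorem exists_dotProduct_mulVec_eq_of_linearIndependent [DecidableEq n] {B : Matrix n n K}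
    (hB : IsUnit B) {y : m → n → K} (hy : LinearIndependent K y) (t : m → K) :
    ∃ w, ∀ i, y i ⬝ᵥ B *ᵥ w = t i := by
  obtain ⟨w, hw⟩ := exists_dotProduct_eq_of_linearIndependent hy t
  refine ⟨B⁻¹ *ᵥ w, fun i => ?_⟩
  rw [mulVec_mulVec, mul_nonsing_inv B ((isUnit_iff_isUnit_det B).mp hB), one_mulVec, hw]

theorem exists_dotProduct_mulVec_eq_of_notMem_span [DecidableEq n] {B : Matrix n n K}
    (hB : IsUnit B) {y : m → n → K} (hy : LinearIndependent K y) {c : n → K}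
    (hc : c ∉ Submodule.span K (Set.range y)) (t : m → K) (b : K) :
    ∃ w, (∀ i, y i ⬝ᵥ B *ᵥ w = t i) ∧ c ⬝ᵥ B *ᵥ w = b := by
  obtain ⟨w, hw⟩ := exists_dotProduct_mulVec_eq_of_linearIndependent hB (hy.option hc)
    fun o => Option.casesOn' o b t
  exact ⟨w, fun i => hw (some i), hw none⟩

theorem IsSymm.dotProduct_mulVec_comm {R : Type*} [CommSemiring R] {B : Matrix n n R}
    (hB : B.IsSymm) (u v : n → R) : u ⬝ᵥ B *ᵥ v = v ⬝ᵥ B *ᵥ u := by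
  rw [dotProduct_mulVec, ← mulVec_transpose, hB.eq, dotProduct_comm]

variable [DecidableEq n]

theorem IsSymm.dotProduct_mulVec_self {M : Matrix n n (ZMod 2)} (hM : M.IsSymm)
    (v : n → ZMod 2) : v ⬝ᵥ M *ᵥ v = M.diag ⬝ᵥ v := by
  let Q : (n → ZMod 2) →+ ZMod 2 :=
    AddMonoidHom.mk' (fun v => v ⬝ᵥ M *ᵥ v) fun u v => by
      simp only [mulVec_add, add_dotProduct, dotProduct_add, hM.dotProduct_mulVec_comm v u]
      linear_combination CharTwo.add_self_eq_zero (u ⬝ᵥ M *ᵥ v)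
  have hQ : Q = (dotProductBilin (ZMod 2) (ZMod 2) M.diag).toAddMonoidHom := by
    refine AddMonoidHom.functions_ext _ _ _ fun i a => ?_
    have ha : a * a = a := by fin_cases a <;> rfl
    simp only [AddMonoidHom.mk'_apply, mulVec_single, op_smul_eq_smul, dotProduct_smul,
      single_dotProduct, col_apply, smul_eq_mul, LinearMap.toAddMonoidHom_coe,
      dotProductBilin_apply_apply, dotProduct_single, diag_apply, Q]
    linear_combination M i i * ha
  exact DFunLike.congr_fun hQ v

theorem IsSymm.exists_characteristic_vector {B : Matrix n n (ZMod 2)} (hB : B.IsSymm)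
    (hBu : IsUnit B) : ∃ c, ∀ v, c ⬝ᵥ B *ᵥ v = v ⬝ᵥ B *ᵥ v := by
  refine ⟨B⁻¹ *ᵥ B.diag, fun v => ?_⟩
  rw [hB.dotProduct_mulVec_comm, mulVec_mulVec,
    mul_nonsing_inv B ((isUnit_iff_isUnit_det B).mp hBu), one_mulVec,
    hB.dotProduct_mulVec_self, dotProduct_comm]

end Matrix

theorem ZMod.exists_eq_zero_of_sum_eq_one {ι : Type*} [Fintype ι] (hι : Even (Fintype.card ι))
    {a : ι → ZMod 2} (ha : ∑ i, a i = 1) : ∃ i, a i = 0 := by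
  by_contra! hne
  have hone : ∀ i, a i = 1 := fun i => Fin.eq_one_of_ne_zero (a i) (hne i)
  simp [hone, ZMod.natCast_eq_zero_iff_even.mpr hι] at ha

theorem Matrix.exists_dotProduct_mulVec_eq_single_of_mem_span {ι n : Type*} [Fintype ι]
    [Nonempty ι] [DecidableEq ι] [Fintype n] [DecidableEq n] (hι : Even (Fintype.card ι))
    {B : Matrix n n (ZMod 2)} (hB : IsUnit B) {x : ι → n → ZMod 2}
    (hx : LinearIndependent (ZMod 2) x) (hxx : ∀ i j, x i ⬝ᵥ B *ᵥ x j = 1) {c : n → ZMod 2}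
    (hc : ∀ v, c ⬝ᵥ B *ᵥ v = v ⬝ᵥ B *ᵥ v) (hcx : c ∈ Submodule.span (ZMod 2) (Set.range x)) :
    ∃ w s, (∀ i, x i ⬝ᵥ B *ᵥ w = (Pi.single s 1 : ι → ZMod 2) i) ∧ c ⬝ᵥ B *ᵥ w = 0 := by
  obtain ⟨a, rfl⟩ := (Submodule.mem_span_range_iff_exists_fun _).mp hcx
  have hpair : ∀ v, (∑ i, a i • x i) ⬝ᵥ B *ᵥ v = ∑ i, a i * (x i ⬝ᵥ B *ᵥ v) := fun v => by
    simp only [sum_dotProduct, smul_dotProduct, smul_eq_mul]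
  obtain ⟨j⟩ := ‹Nonempty ι›
  obtain ⟨s, hs⟩ : ∃ s, a s = 0 := by
    refine ZMod.exists_eq_zero_of_sum_eq_one hι ?_
    simpa [hxx, hpair] using hc (x j)
  obtain ⟨w, hw⟩ := exists_dotProduct_mulVec_eq_of_linearIndependent hB hx (Pi.single s 1)
  exact ⟨w, s, hw, by simp [hpair, hw, Pi.single_apply, hs]⟩

theorem exists_extension_vector_general {n r : ℕ} (hr : Even r) (hr2 : 2 ≤ r)
    (x : Fin r → Fin n → ZMod 2) (hli : LinearIndependent (ZMod 2) x)
    (A : Matrix (Fin n) (Fin n) (ZMod 2)) (hAs : A.IsSymm) (hA : IsUnit A)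
    (hx : ∀ i j, x i ⬝ᵥ A⁻¹ *ᵥ x j = 1) :
    ∃ (w : Fin n → ZMod 2) (s : Fin r),
      x s ⬝ᵥ A⁻¹ *ᵥ w = 1 ∧
      (∀ t : Fin r, t ≠ s → x t ⬝ᵥ A⁻¹ *ᵥ w = 0) ∧
      w ⬝ᵥ A⁻¹ *ᵥ w = 0 := by
  have hB : IsUnit A⁻¹ := isUnit_nonsing_inv_iff.mpr hA
  obtain ⟨c, hc⟩ := hAs.inv.exists_characteristic_vector hB
  have : Nonempty (Fin r) := ⟨⟨0, by omega⟩⟩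
  obtain ⟨w, s, hw, hcw⟩ : ∃ w s, (∀ i, x i ⬝ᵥ A⁻¹ *ᵥ w = (Pi.single s 1 : Fin r → ZMod 2) i) ∧
      c ⬝ᵥ A⁻¹ *ᵥ w = 0 := by
    by_cases hcx : c ∈ Submodule.span (ZMod 2) (Set.range x)
    · exact exists_dotProduct_mulVec_eq_single_of_mem_span (by simpa using hr) hB hli hx hc hcx
    · obtain ⟨w, hw⟩ := exists_dotProduct_mulVec_eq_of_notMem_span hB hli hcx
        (Pi.single (Classical.arbitrary _) 1) 0
      exact ⟨w, _, hw⟩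
  exact ⟨w, s, by simpa using hw s, fun t hts => by simpa [hts] using hw t, hc w ▸ hcw⟩

/-- Given even `r` with `2 ≤ r ≤ n`, linearly independent `x₁,…,x_r` and `A ∈ SGL_n(F₂)`
with `xᵢᵀ A⁻¹ xⱼ = 1` for all `i,j`, there is a vector `x_{r+1}` and an index `s` with
`x_sᵀ A⁻¹ x_{r+1} = 1`, `x_tᵀ A⁻¹ x_{r+1} = 0` for all `t ≠ s`, and
`x_{r+1}ᵀ A⁻¹ x_{r+1} = 0`. -/
theorem exists_extension_vector {n r : ℕ} (hr : Even r) (hr2 : 2 ≤ r) (hrn : r ≤ n)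
    (x : Fin r → Fin n → ZMod 2) (hli : LinearIndependent (ZMod 2) x)
    (A : Matrix (Fin n) (Fin n) (ZMod 2)) (hAs : A.IsSymm) (hA : IsUnit A)
    (hx : ∀ i j, x i ⬝ᵥ A⁻¹ *ᵥ x j = 1) :
    ∃ (w : Fin n → ZMod 2) (s : Fin r),
      x s ⬝ᵥ A⁻¹ *ᵥ w = 1 ∧
      (∀ t : Fin r, t ≠ s → x t ⬝ᵥ A⁻¹ *ᵥ w = 0) ∧
      w ⬝ᵥ A⁻¹ *ᵥ w = 0 :=
  exists_extension_vector_general hr hr2 x hli A hAs hA hx
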